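/- For any k < n, if a string x is drawn uniformly from the n-bit strings of parity b, then the XOR of any fixed k of its coordinates is 0 with probability 1/2 and 1 with probability 1/2, independently of b. -/
import Mathlib

open Finset

private lemma flip_card (n : ℕ) (T U : Finset (Fin n)) (i : Fin n)
    (hiT : i ∈ T) (hiU : i ∉ U) (c d : ZMod 2) :
    (univ.filter fun x : Fin n → ZMod 2 => ∑ j ∈ T, x j = c ∧ ∑ j ∈ U, x j = d).card =
    (univ.filter fun x : Fin n → ZMod 2 => ∑ j ∈ T, x j = c + 1 ∧ ∑ j ∈ U, x j = d).card := by
  have hsumT : ∀ x : Fin n → ZMod 2,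
      ∑ j ∈ T, Function.update x i (x i + 1) j = (∑ j ∈ T, x j) + 1 := by
    intro x
    rw [Finset.sum_update_of_mem hiT, Finset.sum_eq_add_sum_sdiff_singleton_of_mem hiT]
    ring
  have hsumU : ∀ x : Fin n → ZMod 2,
      ∑ j ∈ U, Function.update x i (x i + 1) j = ∑ j ∈ U, x j := by
    intro x
    refine Finset.sum_congr rfl fun j hj => ?_
    exact Function.update_of_ne (by rintro rfl; exact hiU hj) _ _
  have h11 : (1 : ZMod 2) + 1 = 0 := by decide
  have hflip : ∀ x : Fin n → ZMod 2,
      Function.update (Function.update x i (x i + 1)) i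
        (Function.update x i (x i + 1) i + 1) = x := by
    intro x
    funext j
    by_cases hj : j = i
    · subst hj
      simp only [Function.update_self]
      rw [add_assoc, h11, add_zero]
    · simp [Function.update_of_ne hj]
  refine Finset.card_bij' (fun x _ => Function.update x i (x i + 1))
    (fun x _ => Function.update x i (x i + 1)) ?_ ?_ ?_ ?_
  · intro x hx
    simp only [mem_filter, mem_univ, true_and] at hx ⊢
    rw [hsumT, hsumU, hx.1]
    exact ⟨rfl, hx.2⟩
  · intro x hx
    simp only [mem_filter, mem_univ, true_and] at hx ⊢
    rw [hsumT, hsumU, hx.1]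
    exact ⟨by rw [add_assoc, h11, add_zero], hx.2⟩
  · intro x _; exact hflip x
  · intro x _; exact hflip x

private lemma split2 {α : Type*} [DecidableEq α] (B : Finset α) (g : α → ZMod 2) :
    (B.filter fun x => g x = 0).card + (B.filter fun x => g x = 1).card = B.card := by
  have h : ∀ y : ZMod 2, (y = 1) = ¬(y = 0) := by decide
  have hfe : B.filter (fun x => g x = 1) = B.filter (fun x => ¬(g x = 0)) :=
    Finset.filter_congr fun x _ => iff_of_eq (h (g x))
  rw [hfe]
  exact Finset.card_filter_add_card_filter_not _

theorem partial_xor_uniform (n k : ℕ) (hk1 : 1 ≤ k) (hk : k < n) (b : ZMod 2)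
    (S : Finset (Fin n)) (hS : S.card = k) :
    (Finset.univ.filter
        (fun x : Fin n → ZMod 2 => ∑ j, x j = b ∧ ∑ j ∈ S, x j = 0)).card = 2 ^ (n - 2) ∧
    (Finset.univ.filter
        (fun x : Fin n → ZMod 2 => ∑ j, x j = b ∧ ∑ j ∈ S, x j = 1)).card = 2 ^ (n - 2) := by
  classical
  obtain ⟨i, hi⟩ : S.Nonempty := Finset.card_pos.mp (by omega)
  have hScard : Sᶜ.card = n - k := by rw [Finset.card_compl, hS]; simp
  obtain ⟨j, hj⟩ : (Sᶜ).Nonempty := Finset.card_pos.mp (by rw [hScard]; omega)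
  have hjS : j ∉ S := by simpa using hj
  set A : ZMod 2 → ZMod 2 → Finset (Fin n → ZMod 2) :=
    fun c d => univ.filter fun x => ∑ t ∈ S, x t = c ∧ ∑ t ∈ Sᶜ, x t = d with hA
  have row : ∀ c d, (A c d).card = (A (c + 1) d).card := fun c d =>
    flip_card n S Sᶜ i hi (by simpa using hi) c d
  have colswap : ∀ c d, (A c d).card =
      (univ.filter fun x : Fin n → ZMod 2 => ∑ t ∈ Sᶜ, x t = d ∧ ∑ t ∈ S, x t = c).card := by
    intro c d
    congr 1
    exact Finset.filter_congr fun x _ => and_comm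
  have col : ∀ c d, (A c d).card = (A c (d + 1)).card := by
    intro c d
    rw [colswap, colswap]
    exact flip_card n Sᶜ S j hj hjS d c
  have allEq : ∀ c d c' d', (A c d).card = (A c' d').card := by
    have h2 : ∀ c : ZMod 2, c = 0 ∨ c = 1 := by decide
    have key : ∀ c d, (A c d).card = (A 0 0).card := by
      intro c d
      have e01 : ((0 : ZMod 2) + 1) = 1 := by decide
      rcases h2 c with rfl | rfl <;> rcases h2 d with rfl | rfl
      · rfl
      · have h := col 0 0; rw [e01] at h; exact h.symm
      · have h := row 0 0; rw [e01] at h; exact h.symm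
      · have h1 := row 0 1; rw [e01] at h1
        have h3 := col 0 0; rw [e01] at h3
        exact h1.symm.trans h3.symm
    intro c d c' d'; rw [key c d, key c' d']
  -- total
  have hAfilter : ∀ c d, A c d =
      (univ.filter fun x : Fin n → ZMod 2 => ∑ t ∈ S, x t = c).filter
        (fun x => ∑ t ∈ Sᶜ, x t = d) := by
    intro c d
    rw [Finset.filter_filter]
  have hrow0 : (A 0 0).card + (A 0 1).card =
      (univ.filter fun x : Fin n → ZMod 2 => ∑ t ∈ S, x t = 0).card := by
    rw [hAfilter, hAfilter]; exact split2 _ _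
  have hrow1 : (A 1 0).card + (A 1 1).card =
      (univ.filter fun x : Fin n → ZMod 2 => ∑ t ∈ S, x t = 1).card := by
    rw [hAfilter, hAfilter]; exact split2 _ _
  have huniv : (univ : Finset (Fin n → ZMod 2)).card = 2 ^ n := by
    simp [Finset.card_univ]
  have htot : (A 0 0).card + (A 0 1).card + ((A 1 0).card + (A 1 1).card) = 2 ^ n := by
    rw [hrow0, hrow1, ← huniv]
    exact split2 _ _
  have hpow : 2 ^ n = 4 * 2 ^ (n - 2) := by
    have h2n : 2 ≤ n := Nat.lt_of_le_of_lt hk1 hk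
    have h : n - 2 + 2 = n := Nat.sub_add_cancel h2n
    calc 2 ^ n = 2 ^ (n - 2 + 2) := by rw [h]
    _ = 4 * 2 ^ (n - 2) := by rw [pow_add]; ring
  have hm : (A 0 0).card = 2 ^ (n - 2) := by
    rw [allEq 0 0 0 1, allEq 0 1 1 0, allEq 1 0 1 1] at htot
    have h4 : 4 * (A 1 1).card = 4 * 2 ^ (n - 2) := by rw [← hpow, ← htot]; ring
    rw [allEq 0 0 1 1]
    exact Nat.eq_of_mul_eq_mul_left (by norm_num) h4
  -- relate to the original statement
  have heq : ∀ c : ZMod 2,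
      (univ.filter fun x : Fin n → ZMod 2 => ∑ t, x t = b ∧ ∑ t ∈ S, x t = c) = A c (b - c) := by
    intro c
    refine Finset.filter_congr fun x _ => ?_
    have hsum : ∑ t ∈ S, x t + ∑ t ∈ Sᶜ, x t = ∑ t, x t := Finset.sum_add_sum_compl S _
    rw [← hsum]
    constructor
    · rintro ⟨h1, rfl⟩
      exact ⟨rfl, eq_sub_of_add_eq' h1⟩
    · rintro ⟨rfl, h2⟩
      exact ⟨by rw [h2]; exact add_sub_cancel _ _, rfl⟩
  constructor
  · rw [heq 0, allEq 0 (b - 0) 0 0, hm]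
  · rw [heq 1, allEq 1 (b - 1) 0 0, hm]
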